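/- Consider the ODE system for n×n complex matrices: A₀' = ½[A₀,A₁²] + ½[A₀²,A₂], A₂' = ½[A₀,A₂²] + ½[A₁²,A₂], A₁' = A₀A₁A₂ − A₂A₁A₀ + ½(A₀A₂A₁ − A₁A₂A₀ + A₁A₀A₂ − A₂A₀A₁). This system preserves the reality conditions A₀* = −A₂ and A₁* = A₁: if (A₀,A₁,A₂) solves the system, then so does (−A₂*, A₁*, −A₀*). -/

import Mathlib

/-! Differentiating entrywise commutes with the conjugate transpose, since complex conjugation is
ℝ-linear and continuous. The claim thus reduces to three identities between the right-hand sides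
of the system, valid in any complex star algebra. -/

open Matrix

section Derivative

variable {F : Type*} [NormedAddCommGroup F] [NormedSpace ℝ F] [StarAddMonoid F] [StarModule ℝ F]
  [ContinuousStar F] {m n : Type*} {A : ℝ → Matrix m n F} {M : Matrix m n F} {s : ℝ}

theorem deriv_conjTranspose_apply_of_deriv_apply
    (hA : ∀ i j, deriv (fun t => A t i j) s = M i j) (i : n) (j : m) :
    deriv (fun t => (A t)ᴴ i j) s = Mᴴ i j := by
  simp only [conjTranspose_apply]
  rw [deriv.star, hA]

theorem deriv_neg_conjTranspose_apply_of_deriv_apply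
    (hA : ∀ i j, deriv (fun t => A t i j) s = M i j) (i : n) (j : m) :
    deriv (fun t => (-(A t)ᴴ) i j) s = (-Mᴴ) i j := by
  show deriv (fun t => -(A t)ᴴ i j) s = -Mᴴ i j
  rw [deriv.fun_neg, deriv_conjTranspose_apply_of_deriv_apply hA]

end Derivative

noncomputable section VectorField

variable {R : Type*} [Ring R] [StarRing R] [Algebra ℂ R] [StarModule ℂ R]

def vectorField₀ (a b c : R) : R :=
  (1/2 : ℂ) • (a * b^2 - b^2 * a) + (1/2 : ℂ) • (a^2 * c - c * a^2)

def vectorField₁ (a b c : R) : R :=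
  a * b * c - c * b * a + (1/2 : ℂ) • (a * c * b - b * c * a + b * a * c - c * a * b)

def vectorField₂ (a b c : R) : R :=
  (1/2 : ℂ) • (a * c^2 - c^2 * a) + (1/2 : ℂ) • (b^2 * c - c * b^2)

theorem neg_star_vectorField₂ (a b c : R) :
    -star (vectorField₂ a b c) = vectorField₀ (-star c) (star b) (-star a) := by
  simp only [vectorField₀, vectorField₂, star_add, star_smul, star_sub, star_mul, star_pow,
    star_div₀, star_one, star_ofNat]
  noncomm_ring
  module

theorem neg_star_vectorField₀ (a b c : R) :
    -star (vectorField₀ a b c) = vectorField₂ (-star c) (star b) (-star a) := by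
  simp only [vectorField₀, vectorField₂, star_add, star_smul, star_sub, star_mul, star_pow,
    star_div₀, star_one, star_ofNat]
  noncomm_ring
  module

theorem star_vectorField₁ (a b c : R) :
    star (vectorField₁ a b c) = vectorField₁ (-star c) (star b) (-star a) := by
  simp only [vectorField₁, star_add, star_smul, star_sub, star_mul,
    star_div₀, star_one, star_ofNat]
  noncomm_ring

end VectorField

/-- The matrix ODE system preserves the reality conditions A₀* = −A₂, A₁* = A₁:
if (A₀,A₁,A₂) solves the system, so does (−A₂ᴴ, A₁ᴴ, −A₀ᴴ). -/
theorem stmt_18 (n : ℕ) (A₀ A₁ A₂ : ℝ → Matrix (Fin n) (Fin n) ℂ)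
    (h0 : ∀ s i j, deriv (fun t => A₀ t i j) s
      = ((1/2 : ℂ) • (A₀ s * (A₁ s)^2 - (A₁ s)^2 * A₀ s)
          + (1/2 : ℂ) • ((A₀ s)^2 * A₂ s - A₂ s * (A₀ s)^2)) i j)
    (h2 : ∀ s i j, deriv (fun t => A₂ t i j) s
      = ((1/2 : ℂ) • (A₀ s * (A₂ s)^2 - (A₂ s)^2 * A₀ s)
          + (1/2 : ℂ) • ((A₁ s)^2 * A₂ s - A₂ s * (A₁ s)^2)) i j)
    (h1 : ∀ s i j, deriv (fun t => A₁ t i j) s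
      = (A₀ s * A₁ s * A₂ s - A₂ s * A₁ s * A₀ s
          + (1/2 : ℂ) • (A₀ s * A₂ s * A₁ s - A₁ s * A₂ s * A₀ s
              + A₁ s * A₀ s * A₂ s - A₂ s * A₀ s * A₁ s)) i j) :
    (∀ s i j, deriv (fun t => (-(A₂ t)ᴴ) i j) s
      = (((1/2 : ℂ) • ((-(A₂ s)ᴴ) * ((A₁ s)ᴴ)^2 - ((A₁ s)ᴴ)^2 * (-(A₂ s)ᴴ))
          + (1/2 : ℂ) • ((-(A₂ s)ᴴ)^2 * (-(A₀ s)ᴴ) - (-(A₀ s)ᴴ) * (-(A₂ s)ᴴ)^2)) i j)) ∧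
    (∀ s i j, deriv (fun t => (-(A₀ t)ᴴ) i j) s
      = (((1/2 : ℂ) • ((-(A₂ s)ᴴ) * ((-(A₀ s)ᴴ))^2 - ((-(A₀ s)ᴴ))^2 * (-(A₂ s)ᴴ))
          + (1/2 : ℂ) • (((A₁ s)ᴴ)^2 * (-(A₀ s)ᴴ) - (-(A₀ s)ᴴ) * ((A₁ s)ᴴ)^2)) i j)) ∧
    (∀ s i j, deriv (fun t => ((A₁ t)ᴴ) i j) s
      = (((-(A₂ s)ᴴ) * (A₁ s)ᴴ * (-(A₀ s)ᴴ) - (-(A₀ s)ᴴ) * (A₁ s)ᴴ * (-(A₂ s)ᴴ)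
          + (1/2 : ℂ) • ((-(A₂ s)ᴴ) * (-(A₀ s)ᴴ) * (A₁ s)ᴴ
              - (A₁ s)ᴴ * (-(A₀ s)ᴴ) * (-(A₂ s)ᴴ)
              + (A₁ s)ᴴ * (-(A₂ s)ᴴ) * (-(A₀ s)ᴴ)
              - (-(A₀ s)ᴴ) * (-(A₂ s)ᴴ) * (A₁ s)ᴴ)) i j)) := by
  refine ⟨fun s i j => ?_, fun s i j => ?_, fun s i j => ?_⟩
  · exact (deriv_neg_conjTranspose_apply_of_deriv_apply (h2 s) i j).trans
      (congr_fun₂ (neg_star_vectorField₂ (A₀ s) (A₁ s) (A₂ s)) i j)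
  · exact (deriv_neg_conjTranspose_apply_of_deriv_apply (h0 s) i j).trans
      (congr_fun₂ (neg_star_vectorField₀ (A₀ s) (A₁ s) (A₂ s)) i j)
  · exact (deriv_conjTranspose_apply_of_deriv_apply (h1 s) i j).trans
      (congr_fun₂ (star_vectorField₁ (A₀ s) (A₁ s) (A₂ s)) i j)
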